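/- arXiv:1910.01260 — 3 statements merged into one kernel-verified Lean document; each statement's English description precedes it below -/
import Mathlib

section
/- Residual-based a posteriori error bound for the spatial ROM with backward Euler: for each time step k, the error satisfies ‖x^k − x̃^k‖₂ ≤ Σ_{i=1}^{k} (Π_{j=i}^{k} η_j) ‖r^i(x̃^i, x̃^{i-1})‖₂, where η_j = ‖(I − Δt_j A)⁻¹‖₂, provided x̃^0 = x^0 and each I − Δt_j A is invertible. -/
open Matrix

noncomputable def vecNorm2 {ι : Type*} [Fintype ι] (v : ι → ℝ) : ℝ :=
  ‖(EuclideanSpace.equiv ι ℝ).symm v‖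

noncomputable def opNorm2 {ι κ : Type*} [Fintype ι] [Fintype κ] [DecidableEq κ]
    (A : Matrix ι κ ℝ) : ℝ :=
  ‖LinearMap.toContinuousLinearMap (Matrix.toEuclideanLin A)‖

lemma vecNorm2_nonneg {ι : Type*} [Fintype ι] (v : ι → ℝ) : 0 ≤ vecNorm2 v :=
  norm_nonneg _

lemma opNorm2_nonneg {ι κ : Type*} [Fintype ι] [Fintype κ] [DecidableEq κ]
    (A : Matrix ι κ ℝ) : 0 ≤ opNorm2 A := norm_nonneg _

lemma vecNorm2_mulVec_le {ι κ : Type*} [Fintype ι] [Fintype κ] [DecidableEq κ]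
    (M : Matrix ι κ ℝ) (v : κ → ℝ) :
    vecNorm2 (M *ᵥ v) ≤ opNorm2 M * vecNorm2 v := by
  have h : (EuclideanSpace.equiv ι ℝ).symm (M *ᵥ v) =
      (LinearMap.toContinuousLinearMap (Matrix.toEuclideanLin M))
        ((EuclideanSpace.equiv κ ℝ).symm v) := by
    simp [LinearMap.coe_toContinuousLinearMap', EuclideanSpace.equiv,
      Matrix.toEuclideanLin_apply_piLp_toLp]
  rw [vecNorm2, h]
  exact (LinearMap.toContinuousLinearMap (Matrix.toEuclideanLin M)).le_opNorm _

lemma vecNorm2_add {ι : Type*} [Fintype ι] (a b : ι → ℝ) :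
    vecNorm2 (a + b) ≤ vecNorm2 a + vecNorm2 b := by
  unfold vecNorm2; rw [map_add]; exact norm_add_le _ _

lemma vecNorm2_sub {ι : Type*} [Fintype ι] (a b : ι → ℝ) :
    vecNorm2 (a - b) ≤ vecNorm2 a + vecNorm2 b := by
  unfold vecNorm2; rw [map_sub]; exact norm_sub_le _ _

/-- Residual-based a posteriori error bound for the spatial ROM with backward Euler. -/
theorem spatial_rom_residual_error_bound {Ns Ni Nt : ℕ}
    (A : Matrix (Fin Ns) (Fin Ns) ℝ) (B : Matrix (Fin Ns) (Fin Ni) ℝ)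
    (Δt : ℕ → ℝ) (f : ℕ → Fin Ni → ℝ)
    (x xt : ℕ → Fin Ns → ℝ)
    (hΔt : ∀ k, 1 ≤ k → k ≤ Nt → 0 < Δt k)
    (hfom : ∀ k, 1 ≤ k → k ≤ Nt →
      (1 - Δt k • A) *ᵥ x k = x (k - 1) + Δt k • (B *ᵥ f k))
    (hinv : ∀ k, 1 ≤ k → k ≤ Nt → IsUnit (1 - Δt k • A).det)
    (h0 : xt 0 = x 0)
    (η : ℕ → ℝ) (hη : ∀ k, η k = opNorm2 (1 - Δt k • A)⁻¹)
    (r : ℕ → (Fin Ns → ℝ) → (Fin Ns → ℝ) → (Fin Ns → ℝ))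
    (hr : ∀ k u v, r k u v = u - v - Δt k • (A *ᵥ u) - Δt k • (B *ᵥ f k)) :
    ∀ k, 1 ≤ k → k ≤ Nt →
      vecNorm2 (x k - xt k) ≤
        ∑ i ∈ Finset.Icc 1 k,
          (∏ j ∈ Finset.Icc i k, η j) * vecNorm2 (r i (xt i) (xt (i - 1))) := by
  -- one-step recursion
  have step : ∀ k, 1 ≤ k → k ≤ Nt →
      vecNorm2 (x k - xt k) ≤
        η k * (vecNorm2 (x (k-1) - xt (k-1)) + vecNorm2 (r k (xt k) (xt (k-1)))) := by
    intro k hk1 hkN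
    have key : (1 - Δt k • A) *ᵥ (x k - xt k)
        = (x (k-1) - xt (k-1)) - r k (xt k) (xt (k-1)) := by
      rw [Matrix.mulVec_sub, hfom k hk1 hkN, hr]
      rw [Matrix.sub_mulVec, Matrix.one_mulVec, Matrix.smul_mulVec]
      ext i
      simp only [Pi.add_apply, Pi.sub_apply, Pi.smul_apply, smul_eq_mul]
      ring
    have hrec : x k - xt k = (1 - Δt k • A)⁻¹ *ᵥ ((x (k-1) - xt (k-1)) - r k (xt k) (xt (k-1))) := by
      rw [← key, Matrix.mulVec_mulVec, Matrix.nonsing_inv_mul _ (hinv k hk1 hkN),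
        Matrix.one_mulVec]
    calc vecNorm2 (x k - xt k)
        ≤ opNorm2 (1 - Δt k • A)⁻¹ *
            vecNorm2 ((x (k-1) - xt (k-1)) - r k (xt k) (xt (k-1))) := by
          rw [hrec]; exact vecNorm2_mulVec_le _ _
      _ ≤ η k * (vecNorm2 (x (k-1) - xt (k-1)) + vecNorm2 (r k (xt k) (xt (k-1)))) := by
          rw [hη]
          exact mul_le_mul_of_nonneg_left (vecNorm2_sub _ _) (opNorm2_nonneg _)
  intro k
  induction k with
  | zero => intro h; omega
  | succ k ih =>
    intro _ hkN
    have hηnn : 0 ≤ η (k+1) := by rw [hη]; exact opNorm2_nonneg _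
    have hstep := step (k+1) (by omega) hkN
    simp only [Nat.add_sub_cancel] at hstep
    rcases Nat.eq_zero_or_pos k with hk0 | hkpos
    · subst hk0
      have : vecNorm2 (x 0 - xt 0) = 0 := by
        rw [h0, sub_self]
        simp [vecNorm2]
      rw [this, zero_add] at hstep
      simpa using hstep
    · have hsum := ih hkpos (by omega)
      have hle : vecNorm2 (x (k+1) - xt (k+1)) ≤
          η (k+1) * (∑ i ∈ Finset.Icc 1 k,
            (∏ j ∈ Finset.Icc i k, η j) * vecNorm2 (r i (xt i) (xt (i - 1)))
            + vecNorm2 (r (k+1) (xt (k+1)) (xt k))) := by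
        refine hstep.trans (mul_le_mul_of_nonneg_left ?_ hηnn)
        exact add_le_add_left hsum _
      refine hle.trans (le_of_eq ?_)
      rw [Finset.sum_Icc_succ_top (by omega : 1 ≤ k+1)]
      rw [mul_add, Finset.mul_sum]
      congr 1
      · refine Finset.sum_congr rfl fun i hi => ?_
        simp only [Finset.mem_Icc] at hi
        rw [Finset.prod_Icc_succ_top (by omega : i ≤ k+1)]
        ring
      · rw [Finset.Icc_self, Finset.prod_singleton]; simp [mul_comm]
end

section
/- ROM-specific one-step error bound: suppose the full model satisfies (I − Δt_k A)x^k = x^{k-1} + Δt_k B f^k and the Galerkin ROM approximation satisfies x̃^k − x̃^{k-1} − Δt_k P A x̃^k − Δt_k P B f^k = 0 with P = Φ Φᵀ for Φ having orthonormal columns (Φᵀ Φ = I). If Δt_k ‖A‖₂ < 1, then ‖δx^k‖₂ ≤ (1 − Δt_k‖A‖₂)⁻¹ (‖δx^{k-1}‖₂ + ‖e^k‖₂), where e^k = Δt_k(A x̃^k + B f^k) and δx^j = x^j − x̃^j. -/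
/-!
Subtracting the Galerkin step from the implicit Euler step, and noting that the ROM equation says
`x̃ᵏ - x̃ᵏ⁻¹ = P eᵏ`, gives the error equation `(I - Δt A) δxᵏ = δxᵏ⁻¹ + (I - P) eᵏ`.
Since `‖(I - Δt A) v‖ ≥ (1 - Δt ‖A‖) ‖v‖` and `I - P` is an orthogonal projector, hence of norm
at most one, the bound follows.
-/

open Matrix

theorem norm_le_inv_mul_norm_sub_smul {E : Type*} [SeminormedAddCommGroup E] [NormedSpace ℝ E]
    (T : E →L[ℝ] E) {t : ℝ} (ht : 0 ≤ t) (htT : t * ‖T‖ < 1) (x : E) :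
    ‖x‖ ≤ (1 - t * ‖T‖)⁻¹ * ‖x - t • T x‖ := by
  have hsmul : ‖t • T x‖ ≤ t * ‖T‖ * ‖x‖ := by
    rw [norm_smul, Real.norm_of_nonneg ht, mul_assoc]
    exact mul_le_mul_of_nonneg_left (T.le_opNorm x) ht
  have htri : ‖x‖ ≤ ‖x - t • T x‖ + ‖t • T x‖ := norm_le_norm_sub_add x _
  rw [inv_mul_eq_div, le_div_iff₀ (sub_pos.2 htT)]
  linarith

theorem Matrix.isStarProjection_mul_conjTranspose {m n R : Type*} [Fintype m] [Fintype n]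
    [DecidableEq n] [CommSemiring R] [StarRing R] {Φ : Matrix m n R} (hΦ : Φᴴ * Φ = 1) :
    IsStarProjection (Φ * Φᴴ) where
  isIdempotentElem := by
    rw [IsIdempotentElem, Matrix.mul_assoc, ← Matrix.mul_assoc Φᴴ, hΦ, Matrix.one_mul]
  isSelfAdjoint := by
    rw [IsSelfAdjoint, star_eq_conjTranspose, conjTranspose_mul, conjTranspose_conjTranspose]

theorem implicit_euler_galerkin_error {n m R : Type*} [Fintype n] [Fintype m] [DecidableEq n]
    [CommRing R]
    (A P : Matrix n n R) (B : Matrix n m R) (t : R) (f : m → R) (x x' y y' : n → R)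
    (hfom : (1 - t • A) *ᵥ x = x' + t • (B *ᵥ f))
    (hrom : y - y' - t • (P *ᵥ (A *ᵥ y)) - t • (P *ᵥ (B *ᵥ f)) = 0) :
    (1 - t • A) *ᵥ (x - y) = (x' - y') + (1 - P) *ᵥ (t • (A *ᵥ y + B *ᵥ f)) := by
  simp only [sub_mulVec, one_mulVec, smul_mulVec, mulVec_sub, mulVec_smul, mulVec_add] at hfom ⊢
  linear_combination (norm := module) hfom - hrom

section vecNorm2

variable {ι : Type*} [Fintype ι]

lemma vecNorm2_eq_norm_toLp (v : ι → ℝ) : vecNorm2 v = ‖WithLp.toLp 2 v‖ := rfl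

lemma vecNorm2_add_le (u v : ι → ℝ) : vecNorm2 (u + v) ≤ vecNorm2 u + vecNorm2 v := by
  simpa only [vecNorm2_eq_norm_toLp, WithLp.toLp_add] using norm_add_le _ _

variable [DecidableEq ι]

lemma opNorm2_eq_norm_toEuclideanCLM (A : Matrix ι ι ℝ) :
    opNorm2 A = ‖toEuclideanCLM (𝕜 := ℝ) A‖ := rfl

lemma vecNorm2_le_inv_mul_vecNorm2_one_sub_smul_mulVec (A : Matrix ι ι ℝ) {t : ℝ} (ht : 0 ≤ t)
    (htA : t * opNorm2 A < 1) (x : ι → ℝ) :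
    vecNorm2 x ≤ (1 - t * opNorm2 A)⁻¹ * vecNorm2 ((1 - t • A) *ᵥ x) := by
  rw [opNorm2_eq_norm_toEuclideanCLM] at htA ⊢
  simpa [vecNorm2_eq_norm_toLp, sub_mulVec, smul_mulVec] using
    norm_le_inv_mul_norm_sub_smul _ ht htA (WithLp.toLp 2 x)

lemma vecNorm2_mulVec_le_of_isStarProjection {Q : Matrix ι ι ℝ} (hQ : IsStarProjection Q)
    (v : ι → ℝ) : vecNorm2 (Q *ᵥ v) ≤ vecNorm2 v := by
  have hnorm : ‖toEuclideanCLM (𝕜 := ℝ) Q‖ ≤ 1 := (hQ.map toEuclideanCLM).norm_le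
  simpa [vecNorm2_eq_norm_toLp] using
    (toEuclideanCLM (𝕜 := ℝ) Q).le_of_opNorm_le hnorm (WithLp.toLp 2 v)

end vecNorm2

/-- ROM-specific one-step error bound. -/
theorem rom_specific_one_step_bound {Ns Ni ns : ℕ}
    (A : Matrix (Fin Ns) (Fin Ns) ℝ) (B : Matrix (Fin Ns) (Fin Ni) ℝ)
    (Δt : ℝ) (hΔt : 0 < Δt) (f : Fin Ni → ℝ)
    (Φ : Matrix (Fin Ns) (Fin ns) ℝ) (hΦ : Φᵀ * Φ = 1)
    (P : Matrix (Fin Ns) (Fin Ns) ℝ) (hP : P = Φ * Φᵀ)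
    (xk xk1 xtk xtk1 : Fin Ns → ℝ)
    (hfom : (1 - Δt • A) *ᵥ xk = xk1 + Δt • (B *ᵥ f))
    (hrom : xtk - xtk1 - Δt • (P *ᵥ (A *ᵥ xtk)) - Δt • (P *ᵥ (B *ᵥ f)) = 0)
    (hsmall : Δt * opNorm2 A < 1)
    (e : Fin Ns → ℝ) (he : e = Δt • (A *ᵥ xtk + B *ᵥ f)) :
    vecNorm2 (xk - xtk) ≤
      (1 - Δt * opNorm2 A)⁻¹ * (vecNorm2 (xk1 - xtk1) + vecNorm2 e) := by
  have herr : (1 - Δt • A) *ᵥ (xk - xtk) = (xk1 - xtk1) + (1 - P) *ᵥ e :=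
    he ▸ implicit_euler_galerkin_error A P B Δt f xk xk1 xtk xtk1 hfom hrom
  have hproj : IsStarProjection (1 - P) := by
    rw [hP, ← conjTranspose_eq_transpose_of_trivial]
    refine (isStarProjection_mul_conjTranspose ?_).one_sub
    rwa [conjTranspose_eq_transpose_of_trivial]
  calc vecNorm2 (xk - xtk)
      ≤ (1 - Δt * opNorm2 A)⁻¹ * vecNorm2 ((1 - Δt • A) *ᵥ (xk - xtk)) :=
        vecNorm2_le_inv_mul_vecNorm2_one_sub_smul_mulVec A hΔt.le hsmall _
    _ ≤ (1 - Δt * opNorm2 A)⁻¹ * (vecNorm2 (xk1 - xtk1) + vecNorm2 e) := by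
        have hfactor_nonneg := inv_nonneg.2 (sub_pos.2 hsmall).le
        rw [herr]
        gcongr
        exact (vecNorm2_add_le _ _).trans
          (add_le_add le_rfl (vecNorm2_mulVec_le_of_isStarProjection hproj e))
end

section
/- Incremental SVD factorization: given U ∈ ℝ^{N×r} with orthonormal columns, Σ ∈ ℝ^{r×r}, V ∈ ℝ^{k×r} with orthonormal columns, and a vector x ∈ ℝ^{N}, let ℓ = Uᵀx, p = ‖x − Uℓ‖, and (assuming p ≠ 0) j = (x − Uℓ)/p. Then [UΣVᵀ | x] = [U j] · [[Σ, ℓ],[0, p]] · [[V, 0],[0, 1]]ᵀ, and moreover [U j] and [[V,0],[0,1]] have orthonormal columns. -/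
open Matrix

/-- Space–time infinity norm: the maximum over time blocks of the Euclidean norms. -/
noncomputable def stNorm {Ns Nt : ℕ} (v : Fin Nt × Fin Ns → ℝ) : ℝ :=
  ⨆ k : Fin Nt, vecNorm2 (fun i => v (k, i))

lemma vecNorm2_sq {ι : Type*} [Fintype ι] (v : ι → ℝ) :
    vecNorm2 v ^ 2 = ∑ i, v i ^ 2 := by
  rw [vecNorm2, EuclideanSpace.norm_eq, Real.sq_sqrt (by positivity)]
  simp [sq_abs]

/-- Incremental SVD rank-one update factorization, together with orthonormality
of the outer factors. -/
theorem incremental_svd_factorization {N r k : ℕ}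
    (U : Matrix (Fin N) (Fin r) ℝ) (hU : Uᵀ * U = 1)
    (S : Matrix (Fin r) (Fin r) ℝ)
    (V : Matrix (Fin k) (Fin r) ℝ) (hV : Vᵀ * V = 1)
    (x : Fin N → ℝ)
    (l : Fin r → ℝ) (hl : l = Uᵀ *ᵥ x)
    (p : ℝ) (hp : p = vecNorm2 (x - U *ᵥ l)) (hp0 : p ≠ 0)
    (j : Fin N → ℝ) (hj : j = p⁻¹ • (x - U *ᵥ l)) :
    Matrix.fromCols (U * S * Vᵀ) (Matrix.of fun i (_ : Fin 1) => x i)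
      = Matrix.fromCols U (Matrix.of fun i (_ : Fin 1) => j i)
        * Matrix.fromBlocks S (Matrix.of fun a (_ : Fin 1) => l a) 0
            (Matrix.of fun (_ : Fin 1) (_ : Fin 1) => p)
        * (Matrix.fromBlocks V 0 0 (1 : Matrix (Fin 1) (Fin 1) ℝ))ᵀ
    ∧ (Matrix.fromCols U (Matrix.of fun i (_ : Fin 1) => j i))ᵀ
        * Matrix.fromCols U (Matrix.of fun i (_ : Fin 1) => j i) = 1
    ∧ (Matrix.fromBlocks V 0 0 (1 : Matrix (Fin 1) (Fin 1) ℝ))ᵀ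
        * Matrix.fromBlocks V 0 0 (1 : Matrix (Fin 1) (Fin 1) ℝ) = 1 := by
  have hsum : ∑ i, (x - U *ᵥ l) i ^ 2 = p ^ 2 := by
    rw [hp, vecNorm2_sq]
  have hUv : Uᵀ *ᵥ (x - U *ᵥ l) = 0 := by
    rw [mulVec_sub, mulVec_mulVec, hU, one_mulVec, ← hl, sub_self]
  have hUj : Uᵀ *ᵥ j = 0 := by
    rw [hj, mulVec_smul, hUv, smul_zero]
  refine ⟨?_, ?_, ?_⟩
  · rw [fromBlocks_transpose, fromCols_mul_fromBlocks, fromCols_mul_fromBlocks]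
    simp only [Matrix.mul_zero, Matrix.zero_mul, add_zero, zero_add,
      transpose_zero, transpose_one, Matrix.mul_one]
    ext i c
    have hji : j i * p = x i - (U *ᵥ l) i := by
      rw [hj]; simp only [Pi.smul_apply, Pi.sub_apply, smul_eq_mul]
      field_simp
    cases c with
    | inl c => simp [fromCols]
    | inr c =>
      simp only [fromCols, of_apply, Sum.elim_inr, Matrix.add_apply, mul_apply,
        Fin.sum_univ_one, hji]
      simp [mulVec, dotProduct]
  · rw [transpose_fromCols, fromRows_mul_fromCols, hU]
    have h1 : Uᵀ * (Matrix.of fun i (_ : Fin 1) => j i) = 0 := by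
      ext a b
      have := congrFun hUj a
      simpa [mul_apply, mulVec, dotProduct] using this
    have h2 : (Matrix.of fun i (_ : Fin 1) => j i)ᵀ * U = 0 := by
      ext a b
      have := congrFun hUj b
      simp only [mul_apply, transpose_apply, of_apply, Matrix.zero_apply]
      simpa [mulVec, dotProduct, mul_comm] using this
    have h3 : (Matrix.of fun i (_ : Fin 1) => j i)ᵀ * (Matrix.of fun i (_ : Fin 1) => j i)
        = 1 := by
      ext a b
      fin_cases a; fin_cases b
      simp only [mul_apply, transpose_apply, of_apply, one_apply_eq]
      have : ∑ i, j i * j i = p⁻¹ ^ 2 * ∑ i, (x - U *ᵥ l) i ^ 2 := by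
        rw [hj, Finset.mul_sum]
        congr 1; ext i
        simp [Pi.smul_apply, smul_eq_mul]; ring
      rw [this, hsum]
      field_simp
    rw [h1, h2, h3, ← fromBlocks_one]
  · rw [fromBlocks_transpose, fromBlocks_multiply]
    simp [hV, ← fromBlocks_one]
end
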